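/- Let p ∈ (0,1] and let 𝒳 = B ∪ G and 𝒳 = B_η ∪ G_η be two partitions of 𝒳 into disjoint sets. Then for every probability measure η on 𝒳, 1/L_η(p) ≤ 2^{6/p − 3} · { γ* · sup_{e : Q(e) ≠ 0} [ (1/Q(e)) Σ_{x ∈ G, y ∈ G_η : e ∈ γ(x,y)} π(x)η(y) ] + 2 · ( Σ_{e ∈ ℬ} 1/Q(e) ) · ( π(B)^{2/p} + η(B_η)^{2/p} ) }. -/

import Mathlib

open scoped BigOperators

noncomputable section

/-- The Dirichlet form `E(f,g)`. -/
def dirichletForm {X : Type} [Fintype X] (π : X → ℝ) (k : X → X → ℝ)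
    (f g : X → ℝ) : ℝ :=
  (1 / 2) * ∑ x, ∑ y, (f x - f y) * (g x - g y) * k x y * π x * π y

/-- The sup norm `‖f‖_∞`. -/
def supNorm {X : Type} [Fintype X] (f : X → ℝ) : ℝ := ⨆ x, |f x|

/-- The generalized Poincaré constant `L_η(p)`. -/
def genPoincare {X : Type} [Fintype X] (π : X → ℝ) (k : X → X → ℝ)
    (η : X → ℝ) (p : ℝ) : ℝ :=
  sInf { r : ℝ | ∃ f : X → ℝ, f ≠ 0 ∧ (∑ x, π x * f x) = 0 ∧ (∑ x, η x * |f x|) ≠ 0 ∧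
    r = dirichletForm π k f f * supNorm f ^ ((2 - 2 * p) / p) /
      (∑ x, η x * |f x|) ^ (2 / p) }

/-- The (ordered) edges of a path given as its list of successive vertices. -/
def pathEdges {X : Type} (l : List X) : List (X × X) := l.zip l.tail

/-- The weight `Q(e) = k(x,y) π(x) π(y)` of an edge `e = (x,y)`. -/
def Qw {X : Type} (π : X → ℝ) (k : X → X → ℝ) (e : X × X) : ℝ :=
  k e.1 e.2 * π e.1 * π e.2

/-! Since `π(f) = 0`, `|f y| ≤ ∑ₓ π(x) |f y - f x|`, so `η(|f|)` is at most the
`π ⊗ η`-average of the increments `|f y - f x|`; split it into the pairs of `G × G_η` (`T`) and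
the rest (`R`). Along the canonical paths, Cauchy–Schwarz and an exchange of summations give
`T² ≤ γ* · A · 2E(f,f)`, where `A` is the maximal congestion; every other pair has an endpoint in
`B` or `B_η`, so its path lies in `ℬ` and Cauchy–Schwarz with weights `1/Q`, `Q` bounds its
increment by `√(2E(f,f) ∑_ℬ 1/Q)`, while these pairs carry mass at most `π(B) + η(B_η)`.
With `q = 2/p ≥ 2` and `|f| ≤ M`, interpolate `a^q ≤ a² (2M)^(q-2)` and combine by
`(a + b)^q ≤ 2^(q-1) (a^q + b^q)`; the resulting homogeneous bound
`η(|f|)^q ≤ C E(f,f) M^(q-2)` with `M = ‖f‖_∞` is `1/L_η(p) ≤ C`.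
-/

theorem Real.rpow_eq_sq_mul_rpow_sub_two {a q : ℝ} (ha : 0 ≤ a) (hq : 2 ≤ q) :
    a ^ q = a ^ 2 * a ^ (q - 2) := by
  rw [← Real.rpow_natCast, ← Real.rpow_add' ha (by norm_num; linarith)]
  norm_num

theorem Real.rpow_le_sq_mul_rpow {a c q : ℝ} (ha : 0 ≤ a) (hac : a ≤ c) (hq : 2 ≤ q) :
    a ^ q ≤ a ^ 2 * c ^ (q - 2) :=
  Real.rpow_eq_sq_mul_rpow_sub_two ha hq ▸
    mul_le_mul_of_nonneg_left (Real.rpow_le_rpow ha hac (by linarith)) (sq_nonneg a)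

theorem Real.add_rpow_le_two_rpow_mul {a b q : ℝ} (ha : 0 ≤ a) (hb : 0 ≤ b) (hq : 1 ≤ q) :
    (a + b) ^ q ≤ 2 ^ (q - 1) * (a ^ q + b ^ q) := by
  exact_mod_cast NNReal.coe_le_coe.2 (NNReal.rpow_add_le_mul_rpow_add_rpow ⟨a, ha⟩ ⟨b, hb⟩ hq)

section Paths

variable {X : Type}

@[simp]
theorem pathEdges_cons_cons (a b : X) (t : List X) :
    pathEdges (a :: b :: t) = (a, b) :: pathEdges (b :: t) := rfl

theorem pathEdges_subset_cons (a : X) (t : List X) : pathEdges t ⊆ pathEdges (a :: t) := by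
  cases t with
  | nil => exact List.nil_subset _
  | cons b t => simp

theorem pathEdges_subset_append (s t : List X) : pathEdges t ⊆ pathEdges (s ++ t) := by
  induction s with
  | nil => simp
  | cons a s ih => exact List.Subset.trans ih (pathEdges_subset_cons a _)

theorem fst_mem_of_mem_pathEdges {e : X × X} {l : List X} (h : e ∈ pathEdges l) : e.1 ∈ l :=
  (List.of_mem_zip h).1

theorem length_pathEdges (l : List X) : (pathEdges l).length = l.length - 1 := by
  simp [pathEdges]

theorem abs_sub_le_sum_of_pathEdges_subset [DecidableEq X] (f : X → ℝ) :
    ∀ {S : Finset (X × X)} (l : List X) {x y : X}, l.head? = some x → l.getLast? = some y →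
      (∀ e ∈ pathEdges l, e ∈ S) → |f y - f x| ≤ ∑ e ∈ S, |f e.2 - f e.1|
  | _, [], _, _, hx, _, _ => by simp at hx
  | S, [a], _, _, hx, hy, _ => by
    simp only [List.head?_cons, List.getLast?_singleton, Option.some.injEq] at hx hy
    subst hx hy
    simpa using Finset.sum_nonneg fun e _ => abs_nonneg (f e.2 - f e.1)
  | S, a :: b :: t, x, y, hx, hy, hS => by
    simp only [List.head?_cons, Option.some.injEq] at hx
    subst hx
    rw [List.getLast?_cons_cons] at hy
    by_cases ha : a ∈ b :: t
    · -- `a` is revisited: shortcut the loop, so that no edge is charged twice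
      obtain ⟨s, u, hsu⟩ := List.append_of_mem ha
      have hlen : (a :: u).length < (a :: b :: t).length := by
        have := congrArg List.length hsu
        simp only [List.length_append, List.length_cons] at this ⊢
        omega
      refine abs_sub_le_sum_of_pathEdges_subset f (a :: u) rfl ?_ fun e he => hS e ?_
      · rwa [hsu, List.getLast?_append_of_ne_nil _ (List.cons_ne_nil _ _)] at hy
      · rw [pathEdges_cons_cons, hsu]
        exact List.mem_cons_of_mem _ (pathEdges_subset_append s _ he)
    · have hab : (a, b) ∉ pathEdges (b :: t) := fun h => ha (fst_mem_of_mem_pathEdges h)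
      have hrest := abs_sub_le_sum_of_pathEdges_subset f (S := S.erase (a, b)) (b :: t) rfl hy
        fun e he => Finset.mem_erase.2 ⟨ne_of_mem_of_not_mem he hab, hS e (by simp [he])⟩
      rw [← Finset.add_sum_erase S _ (hS (a, b) (by simp))]
      calc |f y - f a| ≤ |f b - f a| + |f y - f b| := abs_sub_le _ _ _ |>.trans_eq (add_comm _ _)
        _ ≤ _ := add_le_add_right hrest _
termination_by _ l => l.length
decreasing_by all_goals simp only [List.length_cons] at *; omega

theorem sq_sub_le_mul_sum_sq_pathEdges [DecidableEq X] (f : X → ℝ) {l : List X}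
    {x y : X} (hx : l.head? = some x) (hy : l.getLast? = some y) :
    (f y - f x) ^ 2 ≤
      ((l.length - 1 : ℕ) : ℝ) * ∑ e ∈ (pathEdges l).toFinset, (f e.2 - f e.1) ^ 2 := by
  have hcard : ((pathEdges l).toFinset.card : ℝ) ≤ ((l.length - 1 : ℕ) : ℝ) := by
    rw [← length_pathEdges]
    exact_mod_cast List.toFinset_card_le _
  calc (f y - f x) ^ 2 = |f y - f x| ^ 2 := (sq_abs _).symm
    _ ≤ (∑ e ∈ (pathEdges l).toFinset, |f e.2 - f e.1|) ^ 2 :=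
        pow_le_pow_left₀ (abs_nonneg _)
          (abs_sub_le_sum_of_pathEdges_subset f l hx hy fun e he => List.mem_toFinset.2 he) 2
    _ ≤ (pathEdges l).toFinset.card * ∑ e ∈ (pathEdges l).toFinset, |f e.2 - f e.1| ^ 2 :=
        sq_sum_le_card_mul_sum_sq
    _ ≤ _ := by
        simp only [sq_abs]
        exact mul_le_mul_of_nonneg_right hcard (Finset.sum_nonneg fun e _ => sq_nonneg _)

def IsPathSystem (k : X → X → ℝ) (γ : X → X → List X) : Prop :=
  ∀ x y, x ≠ y → (γ x y).head? = some x ∧ (γ x y).getLast? = some y ∧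
    ∀ e ∈ pathEdges (γ x y), k e.1 e.2 ≠ 0

def maxPathLength (γ : X → X → List X) : ℝ :=
  sSup {r : ℝ | ∃ x y : X, x ≠ y ∧ r = ((γ x y).length - 1 : ℕ)}

theorem maxPathLength_nonneg (γ : X → X → List X) : 0 ≤ maxPathLength γ :=
  Real.sSup_nonneg <| by rintro r ⟨x, y, -, rfl⟩; positivity

end Paths

theorem Qw_nonneg {X : Type} {π : X → ℝ} {k : X → X → ℝ} (hπ : ∀ x, 0 ≤ π x)
    (hk : ∀ x y, 0 ≤ k x y) (e : X × X) : 0 ≤ Qw π k e :=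
  mul_nonneg (mul_nonneg (hk _ _) (hπ _)) (hπ _)

section Dirichlet

variable {X : Type} [Fintype X]

theorem sum_sq_mul_Qw_eq_two_mul_dirichletForm (π : X → ℝ) (k : X → X → ℝ) (f : X → ℝ) :
    ∑ e : X × X, (f e.2 - f e.1) ^ 2 * Qw π k e = 2 * dirichletForm π k f f := by
  rw [dirichletForm, Fintype.sum_prod_type, ← mul_assoc, show (2 : ℝ) * (1 / 2) = 1 by norm_num,
    one_mul]
  refine Finset.sum_congr rfl fun x _ => Finset.sum_congr rfl fun y _ => ?_
  simp only [Qw]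
  ring

theorem sum_sq_mul_Qw_le {π : X → ℝ} {k : X → X → ℝ} (hQ : ∀ e, 0 ≤ Qw π k e) (f : X → ℝ)
    (s : Finset (X × X)) :
    ∑ e ∈ s, (f e.2 - f e.1) ^ 2 * Qw π k e ≤ 2 * dirichletForm π k f f :=
  sum_sq_mul_Qw_eq_two_mul_dirichletForm π k f ▸
    Finset.sum_le_sum_of_subset_of_nonneg (Finset.subset_univ s)
      fun e _ _ => mul_nonneg (sq_nonneg _) (hQ e)

theorem dirichletForm_nonneg {π : X → ℝ} {k : X → X → ℝ} (hQ : ∀ e, 0 ≤ Qw π k e)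
    (f : X → ℝ) : 0 ≤ dirichletForm π k f f := by
  have := sum_sq_mul_Qw_le hQ f ∅
  rw [Finset.sum_empty] at this
  linarith

end Dirichlet

section Mean

variable {X : Type} [Fintype X] {π η : X → ℝ}

theorem abs_le_sum_mul_abs_sub (hπ : ∀ x, 0 ≤ π x) (hπ1 : ∑ x, π x = 1) {f : X → ℝ}
    (hf : ∑ x, π x * f x = 0) (y : X) : |f y| ≤ ∑ x, π x * |f y - f x| := by
  have hy : f y = ∑ x, π x * (f y - f x) := by
    simp only [mul_sub, Finset.sum_sub_distrib, ← Finset.sum_mul, hπ1, hf]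
    ring
  calc |f y| = |∑ x, π x * (f y - f x)| := congrArg _ hy
    _ ≤ ∑ x, |π x * (f y - f x)| := Finset.abs_sum_le_sum_abs _ _
    _ = ∑ x, π x * |f y - f x| := by simp only [abs_mul, abs_of_nonneg (hπ _)]

theorem sum_mul_abs_le_sum_pairs (hπ : ∀ x, 0 ≤ π x) (hπ1 : ∑ x, π x = 1)
    (hη : ∀ x, 0 ≤ η x) {f : X → ℝ} (hf : ∑ x, π x * f x = 0) :
    ∑ y, η y * |f y| ≤ ∑ z : X × X, π z.1 * η z.2 * |f z.2 - f z.1| := by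
  calc ∑ y, η y * |f y| ≤ ∑ y, η y * ∑ x, π x * |f y - f x| :=
        Finset.sum_le_sum fun y _ =>
          mul_le_mul_of_nonneg_left (abs_le_sum_mul_abs_sub hπ hπ1 hf y) (hη y)
    _ = _ := by
        rw [Fintype.sum_prod_type, Finset.sum_comm]
        simp only [Finset.mul_sum]
        exact Finset.sum_congr rfl fun y _ => Finset.sum_congr rfl fun x _ => by ring

theorem sum_pairs_le_one (hπ : ∀ x, 0 ≤ π x) (hπ1 : ∑ x, π x = 1) (hη : ∀ x, 0 ≤ η x)
    (hη1 : ∑ x, η x = 1) (s : Finset (X × X)) : ∑ z ∈ s, π z.1 * η z.2 ≤ 1 := by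
  calc ∑ z ∈ s, π z.1 * η z.2 ≤ ∑ z : X × X, π z.1 * η z.2 :=
        Finset.sum_le_sum_of_subset_of_nonneg (Finset.subset_univ s)
          fun z _ _ => mul_nonneg (hπ _) (hη _)
    _ = 1 := by rw [Fintype.sum_prod_type, ← Finset.sum_mul_sum, hπ1, hη1, one_mul]

end Mean

section CanonicalPaths

variable {X : Type} [Fintype X]

def pathFlow [DecidableEq X] (π η : X → ℝ) (γ : X → X → List X) (G Gη : Finset X)
    (e : X × X) : ℝ :=
  ∑ x, ∑ y, if x ∈ G ∧ y ∈ Gη ∧ x ≠ y ∧ e ∈ pathEdges (γ x y) then π x * η y else 0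

def maxCongestion [DecidableEq X] (π η : X → ℝ) (k : X → X → ℝ) (γ : X → X → List X)
    (G Gη : Finset X) : ℝ :=
  sSup {r : ℝ | ∃ e : X × X, Qw π k e ≠ 0 ∧ r = (1 / Qw π k e) * pathFlow π η γ G Gη e}

/-- The set `ℬ`. -/
def badEdges [DecidableEq X] (γ : X → X → List X) (B Bη : Finset X) : Finset (X × X) :=
  {e | ∃ x y : X, x ≠ y ∧ e ∈ pathEdges (γ x y) ∧ (x ∈ B ∨ y ∈ Bη)}

def goodPairs [DecidableEq X] (G Gη : Finset X) : Finset (X × X) :=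
  {z | z.1 ∈ G ∧ z.2 ∈ Gη ∧ z.1 ≠ z.2}

variable {π η : X → ℝ} {k : X → X → ℝ} {γ : X → X → List X}

theorem length_sub_one_le_maxPathLength {x y : X} (hxy : x ≠ y) :
    (((γ x y).length - 1 : ℕ) : ℝ) ≤ maxPathLength γ := by
  refine le_csSup ?_ ⟨x, y, hxy, rfl⟩
  refine (Set.finite_range fun z : X × X => (((γ z.1 z.2).length - 1 : ℕ) : ℝ)).bddAbove.mono ?_
  rintro r ⟨x, y, -, rfl⟩
  exact ⟨(x, y), rfl⟩

theorem pathFlow_nonneg [DecidableEq X] (hπ : ∀ x, 0 ≤ π x) (hη : ∀ x, 0 ≤ η x)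
    (G Gη : Finset X) (e : X × X) : 0 ≤ pathFlow π η γ G Gη e :=
  Finset.sum_nonneg fun x _ => Finset.sum_nonneg fun y _ => by
    split_ifs
    exacts [mul_nonneg (hπ x) (hη y), le_rfl]

theorem maxCongestion_nonneg [DecidableEq X] (hπ : ∀ x, 0 ≤ π x) (hη : ∀ x, 0 ≤ η x)
    (hk : ∀ x y, 0 ≤ k x y) (G Gη : Finset X) : 0 ≤ maxCongestion π η k γ G Gη :=
  Real.sSup_nonneg <| by
    rintro r ⟨e, -, rfl⟩
    exact mul_nonneg (one_div_nonneg.2 (Qw_nonneg hπ hk e)) (pathFlow_nonneg hπ hη G Gη e)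

theorem pathFlow_le_maxCongestion_mul [DecidableEq X] (hπ : ∀ x, 0 < π x)
    (hk : ∀ x y, 0 ≤ k x y) (hγ : IsPathSystem k γ) (G Gη : Finset X) (e : X × X) :
    pathFlow π η γ G Gη e ≤ maxCongestion π η k γ G Gη * Qw π k e := by
  by_cases hQ : Qw π k e = 0
  · -- an edge of weight zero lies on no path, so it carries no flow
    have : pathFlow π η γ G Gη e = 0 :=
      Finset.sum_eq_zero fun x _ => Finset.sum_eq_zero fun y _ => if_neg fun ⟨_, _, hxy, he⟩ =>
        mul_ne_zero (mul_ne_zero ((hγ x y hxy).2.2 e he) (hπ _).ne') (hπ _).ne' hQ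
    rw [this, hQ, mul_zero]
  · have hbdd : BddAbove {r : ℝ | ∃ e : X × X, Qw π k e ≠ 0 ∧
        r = (1 / Qw π k e) * pathFlow π η γ G Gη e} := by
      refine (Set.finite_range fun e => (1 / Qw π k e) * pathFlow π η γ G Gη e).bddAbove.mono ?_
      rintro r ⟨e, -, rfl⟩
      exact ⟨e, rfl⟩
    have hQpos := (Qw_nonneg (fun x => (hπ x).le) hk e).lt_of_ne' hQ
    have := le_csSup hbdd ⟨e, hQ, rfl⟩
    rwa [one_div_mul_eq_div, div_le_iff₀ hQpos] at this

end CanonicalPaths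

section GoodPairs

variable {X : Type} [Fintype X] [DecidableEq X] {π η : X → ℝ} {k : X → X → ℝ}
  {γ : X → X → List X} {G Gη : Finset X}

theorem pathFlow_eq_sum_goodPairs (e : X × X) :
    pathFlow π η γ G Gη e =
      ∑ z ∈ goodPairs G Gη, if e ∈ pathEdges (γ z.1 z.2) then π z.1 * η z.2 else 0 := by
  rw [pathFlow, goodPairs, Finset.sum_filter, Fintype.sum_prod_type]
  simp only [ite_and]

theorem sum_goodPairs_mul_sum_pathEdges (h : X × X → ℝ) :
    ∑ z ∈ goodPairs G Gη, π z.1 * η z.2 * ∑ e ∈ (pathEdges (γ z.1 z.2)).toFinset, h e =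
      ∑ e, h e * pathFlow π η γ G Gη e := by
  simp only [pathFlow_eq_sum_goodPairs, Finset.mul_sum]
  rw [Finset.sum_comm]
  refine Finset.sum_congr rfl fun z _ => ?_
  rw [← Finset.sum_subset (Finset.subset_univ _) fun e _ he => by
    rw [if_neg fun h => he (List.mem_toFinset.2 h), mul_zero]]
  refine Finset.sum_congr rfl fun e he => ?_
  rw [if_pos (List.mem_toFinset.1 he)]
  ring

theorem sq_sub_le_maxPathLength_mul (hγ : IsPathSystem k γ) (f : X → ℝ) {x y : X} (hxy : x ≠ y) :
    (f y - f x) ^ 2 ≤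
      maxPathLength γ * ∑ e ∈ (pathEdges (γ x y)).toFinset, (f e.2 - f e.1) ^ 2 :=
  (sq_sub_le_mul_sum_sq_pathEdges f (hγ x y hxy).1 (hγ x y hxy).2.1).trans <|
    mul_le_mul_of_nonneg_right (length_sub_one_le_maxPathLength hxy)
      (Finset.sum_nonneg fun _ _ => sq_nonneg _)

theorem sq_sum_goodPairs_le (hπ : ∀ x, 0 < π x) (hπ1 : ∑ x, π x = 1) (hη : ∀ x, 0 ≤ η x)
    (hη1 : ∑ x, η x = 1) (hk : ∀ x y, 0 ≤ k x y) (hγ : IsPathSystem k γ) (f : X → ℝ) :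
    (∑ z ∈ goodPairs G Gη, π z.1 * η z.2 * |f z.2 - f z.1|) ^ 2 ≤
      maxPathLength γ * maxCongestion π η k γ G Gη * (2 * dirichletForm π k f f) := by
  have hπ0 : ∀ x, 0 ≤ π x := fun x => (hπ x).le
  have hw : ∀ z : X × X, 0 ≤ π z.1 * η z.2 := fun z => mul_nonneg (hπ0 _) (hη _)
  have hγ0 := maxPathLength_nonneg γ
  calc (∑ z ∈ goodPairs G Gη, π z.1 * η z.2 * |f z.2 - f z.1|) ^ 2
      ≤ (∑ z ∈ goodPairs G Gη, π z.1 * η z.2) *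
          ∑ z ∈ goodPairs G Gη, π z.1 * η z.2 * (f z.2 - f z.1) ^ 2 :=
        Finset.sum_sq_le_sum_mul_sum_of_sq_le_mul _ (fun z _ => hw z)
          (fun z _ => mul_nonneg (hw z) (sq_nonneg _)) fun z _ => by
            rw [mul_pow, sq_abs, sq]; exact le_of_eq (by ring)
    _ ≤ ∑ z ∈ goodPairs G Gη, π z.1 * η z.2 * (f z.2 - f z.1) ^ 2 :=
        mul_le_of_le_one_left (Finset.sum_nonneg fun z _ => mul_nonneg (hw z) (sq_nonneg _))
          (sum_pairs_le_one hπ0 hπ1 hη hη1 _)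
    _ ≤ ∑ z ∈ goodPairs G Gη, π z.1 * η z.2 *
          (maxPathLength γ * ∑ e ∈ (pathEdges (γ z.1 z.2)).toFinset, (f e.2 - f e.1) ^ 2) :=
        Finset.sum_le_sum fun z hz => mul_le_mul_of_nonneg_left
          (sq_sub_le_maxPathLength_mul hγ f (Finset.mem_filter.1 hz).2.2.2) (hw z)
    _ = maxPathLength γ * ∑ e, (f e.2 - f e.1) ^ 2 * pathFlow π η γ G Gη e := by
        rw [← sum_goodPairs_mul_sum_pathEdges, Finset.mul_sum]
        exact Finset.sum_congr rfl fun z _ => by ring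
    _ ≤ maxPathLength γ * ∑ e, (f e.2 - f e.1) ^ 2 * (maxCongestion π η k γ G Gη * Qw π k e) :=
        mul_le_mul_of_nonneg_left (Finset.sum_le_sum fun e _ => mul_le_mul_of_nonneg_left
          (pathFlow_le_maxCongestion_mul hπ hk hγ G Gη e) (sq_nonneg _)) hγ0
    _ = maxPathLength γ * maxCongestion π η k γ G Gη * (2 * dirichletForm π k f f) := by
        simp only [← sum_sq_mul_Qw_eq_two_mul_dirichletForm, Finset.mul_sum]
        exact Finset.sum_congr rfl fun e _ => by ring

theorem rpow_sum_goodPairs_le {q : ℝ} (hq : 2 ≤ q) (hπ : ∀ x, 0 < π x) (hπ1 : ∑ x, π x = 1)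
    (hη : ∀ x, 0 ≤ η x) (hη1 : ∑ x, η x = 1) (hk : ∀ x y, 0 ≤ k x y) (hγ : IsPathSystem k γ)
    {f : X → ℝ} {D : ℝ} (hD0 : 0 ≤ D) (hD : ∀ x y, |f y - f x| ≤ D) :
    (∑ z ∈ goodPairs G Gη, π z.1 * η z.2 * |f z.2 - f z.1|) ^ q ≤
      maxPathLength γ * maxCongestion π η k γ G Gη * (2 * dirichletForm π k f f) *
        D ^ (q - 2) := by
  have hπ0 : ∀ x, 0 ≤ π x := fun x => (hπ x).le
  have hw : ∀ z : X × X, 0 ≤ π z.1 * η z.2 := fun z => mul_nonneg (hπ0 _) (hη _)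
  have hT0 : 0 ≤ ∑ z ∈ goodPairs G Gη, π z.1 * η z.2 * |f z.2 - f z.1| :=
    Finset.sum_nonneg fun z _ => mul_nonneg (hw z) (abs_nonneg _)
  have hTD : ∑ z ∈ goodPairs G Gη, π z.1 * η z.2 * |f z.2 - f z.1| ≤ D :=
    calc _ ≤ ∑ z ∈ goodPairs G Gη, π z.1 * η z.2 * D :=
          Finset.sum_le_sum fun z _ => mul_le_mul_of_nonneg_left (hD _ _) (hw z)
      _ = (∑ z ∈ goodPairs G Gη, π z.1 * η z.2) * D := (Finset.sum_mul _ _ _).symm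
      _ ≤ D := mul_le_of_le_one_left hD0 (sum_pairs_le_one hπ0 hπ1 hη hη1 _)
  exact (Real.rpow_le_sq_mul_rpow hT0 hTD hq).trans <| mul_le_mul_of_nonneg_right
    (sq_sum_goodPairs_le hπ hπ1 hη hη1 hk hγ f) (Real.rpow_nonneg hD0 _)

end GoodPairs

section BadPairs

variable {X : Type} [Fintype X] [DecidableEq X] {π η : X → ℝ} {k : X → X → ℝ}
  {γ : X → X → List X} {B G Bη Gη : Finset X}

theorem abs_sub_le_sqrt_badEdges (hπ : ∀ x, 0 < π x) (hk : ∀ x y, 0 ≤ k x y)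
    (hγ : IsPathSystem k γ) (f : X → ℝ) {x y : X} (hxy : x ≠ y) (hB : x ∈ B ∨ y ∈ Bη) :
    |f y - f x| ≤
      √((∑ e ∈ badEdges γ B Bη, 1 / Qw π k e) * (2 * dirichletForm π k f f)) := by
  have hQ : ∀ e ∈ badEdges γ B Bη, 0 < Qw π k e := fun e he => by
    obtain ⟨x, y, hxy, he, -⟩ := (Finset.mem_filter.1 he).2
    exact (Qw_nonneg (fun x => (hπ x).le) hk e).lt_of_ne'
      (mul_ne_zero (mul_ne_zero ((hγ x y hxy).2.2 e he) (hπ _).ne') (hπ _).ne')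
  have hpath : |f y - f x| ≤ ∑ e ∈ badEdges γ B Bη, |f e.2 - f e.1| :=
    abs_sub_le_sum_of_pathEdges_subset f _ (hγ x y hxy).1 (hγ x y hxy).2.1 fun e he =>
      Finset.mem_filter.2 ⟨Finset.mem_univ e, x, y, hxy, he, hB⟩
  have hcs : (∑ e ∈ badEdges γ B Bη, |f e.2 - f e.1|) ^ 2 ≤
      (∑ e ∈ badEdges γ B Bη, 1 / Qw π k e) *
        ∑ e ∈ badEdges γ B Bη, (f e.2 - f e.1) ^ 2 * Qw π k e :=
    Finset.sum_sq_le_sum_mul_sum_of_sq_le_mul _ (fun e he => (one_div_pos.2 (hQ e he)).le)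
      (fun e he => mul_nonneg (sq_nonneg _) (hQ e he).le) fun e he => by
        rw [sq_abs, one_div_mul_eq_div, mul_div_cancel_right₀ _ (hQ e he).ne']
  refine hpath.trans (Real.le_sqrt_of_sq_le (hcs.trans ?_))
  exact mul_le_mul_of_nonneg_left (sum_sq_mul_Qw_le (Qw_nonneg (fun x => (hπ x).le) hk) f _)
    (Finset.sum_nonneg fun e he => (one_div_pos.2 (hQ e he)).le)

theorem sum_compl_goodPairs_le (hπ : ∀ x, 0 ≤ π x) (hπ1 : ∑ x, π x = 1) (hη : ∀ x, 0 ≤ η x)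
    (hη1 : ∑ x, η x = 1) (hcover : B ∪ G = Finset.univ) (hcoverη : Bη ∪ Gη = Finset.univ)
    {f : X → ℝ} {D : ℝ} (hD0 : 0 ≤ D)
    (hD : ∀ x y, x ≠ y → (x ∈ B ∨ y ∈ Bη) → |f y - f x| ≤ D) :
    ∑ z ∈ (goodPairs G Gη)ᶜ, π z.1 * η z.2 * |f z.2 - f z.1| ≤
      D * (∑ x ∈ B, π x + ∑ y ∈ Bη, η y) := by
  set b : X × X → ℝ := fun z =>
    (if z.1 ∈ B then π z.1 else 0) * η z.2 + π z.1 * (if z.2 ∈ Bη then η z.2 else 0)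
  have hb0 : ∀ z, 0 ≤ b z := fun z => by
    simp only [b]; split_ifs <;> simp [mul_nonneg, hπ, hη]
  have hterm : ∀ z ∈ (goodPairs G Gη)ᶜ, π z.1 * η z.2 * |f z.2 - f z.1| ≤ D * b z := by
    intro z hz
    by_cases hdiag : z.1 = z.2
    · rw [hdiag, sub_self, abs_zero, mul_zero]
      exact mul_nonneg hD0 (hb0 z)
    have hB : z.1 ∈ B ∨ z.2 ∈ Bη := by
      simp only [goodPairs, Finset.mem_compl, Finset.mem_filter, Finset.mem_univ,
        true_and] at hz
      have h1 := Finset.mem_union.1 (hcover ▸ Finset.mem_univ z.1)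
      have h2 := Finset.mem_union.1 (hcoverη ▸ Finset.mem_univ z.2)
      tauto
    have hwb : π z.1 * η z.2 ≤ b z := by
      simp only [b]
      rcases hB with h | h <;> split_ifs <;> simp_all [mul_nonneg]
    calc π z.1 * η z.2 * |f z.2 - f z.1| ≤ π z.1 * η z.2 * D :=
          mul_le_mul_of_nonneg_left (hD _ _ hdiag hB) (mul_nonneg (hπ _) (hη _))
      _ ≤ D * b z := by rw [mul_comm]; exact mul_le_mul_of_nonneg_left hwb hD0
  have hsum_b : ∑ z, b z = ∑ x ∈ B, π x + ∑ y ∈ Bη, η y := by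
    simp only [b, Finset.sum_add_distrib, Fintype.sum_prod_type, ← Finset.sum_mul_sum,
      Finset.sum_ite_mem, Finset.univ_inter, hπ1, hη1, mul_one, one_mul]
  calc _ ≤ ∑ z ∈ (goodPairs G Gη)ᶜ, D * b z := Finset.sum_le_sum hterm
    _ ≤ ∑ z, D * b z := Finset.sum_le_sum_of_subset_of_nonneg (Finset.subset_univ _)
        fun z _ _ => mul_nonneg hD0 (hb0 z)
    _ = D * (∑ x ∈ B, π x + ∑ y ∈ Bη, η y) := by rw [← Finset.mul_sum, hsum_b]

theorem rpow_sum_compl_goodPairs_le {q : ℝ} (hq : 2 ≤ q) (hπ : ∀ x, 0 < π x)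
    (hπ1 : ∑ x, π x = 1) (hη : ∀ x, 0 ≤ η x) (hη1 : ∑ x, η x = 1) (hk : ∀ x y, 0 ≤ k x y)
    (hγ : IsPathSystem k γ) (hcover : B ∪ G = Finset.univ) (hcoverη : Bη ∪ Gη = Finset.univ)
    {f : X → ℝ} {D : ℝ} (hD0 : 0 ≤ D) (hD : ∀ x y, |f y - f x| ≤ D) :
    (∑ z ∈ (goodPairs G Gη)ᶜ, π z.1 * η z.2 * |f z.2 - f z.1|) ^ q ≤
      (∑ e ∈ badEdges γ B Bη, 1 / Qw π k e) * (2 * dirichletForm π k f f) * D ^ (q - 2) *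
        (∑ x ∈ B, π x + ∑ y ∈ Bη, η y) ^ q := by
  have hπ0 : ∀ x, 0 ≤ π x := fun x => (hπ x).le
  set R := ∑ z ∈ (goodPairs G Gη)ᶜ, π z.1 * η z.2 * |f z.2 - f z.1|
  set W := ∑ x ∈ B, π x + ∑ y ∈ Bη, η y
  set S := (∑ e ∈ badEdges γ B Bη, 1 / Qw π k e) * (2 * dirichletForm π k f f)
  have hR0 : 0 ≤ R := Finset.sum_nonneg fun z _ =>
    mul_nonneg (mul_nonneg (hπ0 _) (hη _)) (abs_nonneg _)
  have hW : 0 ≤ W := add_nonneg (Finset.sum_nonneg fun x _ => hπ0 x)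
    (Finset.sum_nonneg fun x _ => hη x)
  have hS : 0 ≤ S := mul_nonneg (Finset.sum_nonneg fun e _ => one_div_nonneg.2
    (Qw_nonneg hπ0 hk e)) (mul_nonneg zero_le_two (dirichletForm_nonneg (Qw_nonneg hπ0 hk) f))
  have hRD : R ≤ D * W :=
    sum_compl_goodPairs_le hπ0 hπ1 hη hη1 hcover hcoverη hD0 fun x y _ _ => hD x y
  have hRS : R ≤ √S * W :=
    sum_compl_goodPairs_le hπ0 hπ1 hη hη1 hcover hcoverη (Real.sqrt_nonneg _)
      fun x y hxy hB => abs_sub_le_sqrt_badEdges hπ hk hγ f hxy hB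
  have hRS2 : R ^ 2 ≤ S * W ^ 2 :=
    calc R ^ 2 ≤ (√S * W) ^ 2 := pow_le_pow_left₀ hR0 hRS 2
      _ = S * W ^ 2 := by rw [mul_pow, Real.sq_sqrt hS]
  calc R ^ q ≤ R ^ 2 * (D * W) ^ (q - 2) := Real.rpow_le_sq_mul_rpow hR0 hRD hq
    _ ≤ S * W ^ 2 * (D ^ (q - 2) * W ^ (q - 2)) := by
        rw [Real.mul_rpow hD0 hW]
        exact mul_le_mul_of_nonneg_right hRS2 (by positivity)
    _ = S * D ^ (q - 2) * W ^ q := by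
        rw [Real.rpow_eq_sq_mul_rpow_sub_two hW hq]
        ring

end BadPairs

theorem rpow_sum_mul_abs_le {X : Type} [Fintype X] [DecidableEq X] {π η : X → ℝ}
    {k : X → X → ℝ} {γ : X → X → List X} {B G Bη Gη : Finset X} {q : ℝ} (hq : 2 ≤ q)
    (hπ : ∀ x, 0 < π x) (hπ1 : ∑ x, π x = 1) (hη : ∀ x, 0 ≤ η x) (hη1 : ∑ x, η x = 1)
    (hk : ∀ x y, 0 ≤ k x y) (hγ : IsPathSystem k γ) (hcover : B ∪ G = Finset.univ)
    (hcoverη : Bη ∪ Gη = Finset.univ) {f : X → ℝ} (hf : ∑ x, π x * f x = 0) {M : ℝ}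
    (hM : ∀ x, |f x| ≤ M) :
    (∑ x, η x * |f x|) ^ q ≤
      2 ^ (3 * q - 3) * (maxPathLength γ * maxCongestion π η k γ G Gη +
        2 * (∑ e ∈ badEdges γ B Bη, 1 / Qw π k e) * ((∑ x ∈ B, π x) ^ q + (∑ x ∈ Bη, η x) ^ q)) *
        dirichletForm π k f f * M ^ (q - 2) := by
  have hπ0 : ∀ x, 0 ≤ π x := fun x => (hπ x).le
  have hQ := Qw_nonneg hπ0 hk
  have hM0 : 0 ≤ M := by
    obtain ⟨x, -⟩ := Finset.nonempty_of_sum_ne_zero (hη1.trans_ne one_ne_zero)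
    exact (abs_nonneg _).trans (hM x)
  have hdf : ∀ x y, |f y - f x| ≤ 2 * M := fun x y =>
    (abs_sub _ _).trans (by linarith [hM x, hM y])
  set E := dirichletForm π k f f
  set L := maxPathLength γ * maxCongestion π η k γ G Gη
  set SB := ∑ e ∈ badEdges γ B Bη, 1 / Qw π k e
  set P := (∑ x ∈ B, π x) ^ q + (∑ x ∈ Bη, η x) ^ q
  set c : ℝ := 2 ^ (q - 1)
  set m := M ^ (q - 2)
  have hc : 1 ≤ c := Real.one_le_rpow one_le_two (by linarith)
  have h2M : (2 * M) ^ (q - 2) * 2 = c * m := by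
    rw [Real.mul_rpow zero_le_two hM0, mul_right_comm, ← Real.rpow_add_one two_ne_zero,
      show q - 2 + 1 = q - 1 by ring]
  have hE : 0 ≤ E := dirichletForm_nonneg hQ f
  have hL : 0 ≤ L := mul_nonneg (maxPathLength_nonneg γ) (maxCongestion_nonneg hπ0 hη hk G Gη)
  have hSB : 0 ≤ SB := Finset.sum_nonneg fun e _ => one_div_nonneg.2 (hQ e)
  have hπB : 0 ≤ ∑ x ∈ B, π x := Finset.sum_nonneg fun x _ => hπ0 x
  have hηB : 0 ≤ ∑ x ∈ Bη, η x := Finset.sum_nonneg fun x _ => hη x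
  have hP : 0 ≤ P := add_nonneg (Real.rpow_nonneg hπB _) (Real.rpow_nonneg hηB _)
  have hm : 0 ≤ m := Real.rpow_nonneg hM0 _
  have hw : ∀ z : X × X, 0 ≤ π z.1 * η z.2 * |f z.2 - f z.1| := fun z =>
    mul_nonneg (mul_nonneg (hπ0 _) (hη _)) (abs_nonneg _)
  have hT := rpow_sum_goodPairs_le (G := G) (Gη := Gη) hq hπ hπ1 hη hη1 hk hγ (by linarith) hdf
  have hR := (rpow_sum_compl_goodPairs_le hq hπ hπ1 hη hη1 hk hγ hcover hcoverη (by linarith)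
    hdf).trans <| mul_le_mul_of_nonneg_left (Real.add_rpow_le_two_rpow_mul hπB hηB (by linarith))
      (by positivity)
  calc (∑ x, η x * |f x|) ^ q
      ≤ (∑ z ∈ goodPairs G Gη, π z.1 * η z.2 * |f z.2 - f z.1| +
          ∑ z ∈ (goodPairs G Gη)ᶜ, π z.1 * η z.2 * |f z.2 - f z.1|) ^ q :=
        Real.rpow_le_rpow (Finset.sum_nonneg fun x _ => mul_nonneg (hη x) (abs_nonneg _))
          ((sum_mul_abs_le_sum_pairs hπ0 hπ1 hη hf).trans_eq
            (Finset.sum_add_sum_compl _ _).symm) (by linarith)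
    _ ≤ c * (L * (2 * E) * (2 * M) ^ (q - 2) + SB * (2 * E) * (2 * M) ^ (q - 2) * (c * P)) :=
        (Real.add_rpow_le_two_rpow_mul (Finset.sum_nonneg fun z _ => hw z)
          (Finset.sum_nonneg fun z _ => hw z) (by linarith)).trans
          (mul_le_mul_of_nonneg_left (add_le_add hT hR) (by positivity))
    _ = c ^ 2 * (L * E * m) + c ^ 3 * (SB * E * m * P) := by
        linear_combination (c * E * (L + SB * c * P)) * h2M
    _ ≤ c ^ 3 * (L * E * m) + 2 * (c ^ 3 * (SB * E * m * P)) :=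
        add_le_add (mul_le_mul_of_nonneg_right (pow_le_pow_right₀ hc (by norm_num))
          (by positivity)) (le_mul_of_one_le_left (by positivity) one_le_two)
    _ = 2 ^ (3 * q - 3) * (L + 2 * SB * P) * E * m := by
        rw [show 3 * q - 3 = (q - 1) * ((3 : ℕ) : ℝ) by push_cast; ring,
          Real.rpow_mul_natCast zero_le_two]
        ring

theorem abs_le_supNorm {X : Type} [Fintype X] (f : X → ℝ) (x : X) : |f x| ≤ supNorm f :=
  le_ciSup (f := fun x => |f x|) (Set.finite_range _).bddAbove x

theorem one_div_sInf_le_of_forall_one_le_mul {S : Set ℝ} {C : ℝ} (hC : 0 ≤ C)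
    (h : ∀ r ∈ S, 1 ≤ C * r) : 1 / sInf S ≤ C := by
  rcases S.eq_empty_or_nonempty with rfl | ⟨r₀, hr₀⟩
  · simpa using hC
  have hCpos : 0 < C := hC.lt_of_ne fun h0 => by
    linarith [h r₀ hr₀, show C * r₀ = 0 by rw [← h0, zero_mul]]
  have hle : 1 / C ≤ sInf S := le_csInf ⟨r₀, hr₀⟩ fun r hr => by
    rw [div_le_iff₀ hCpos, mul_comm]
    exact h r hr
  exact (one_div_le (lt_of_lt_of_le (by positivity) hle) hCpos).2 hle

theorem one_div_genPoincare_le {X : Type} [Fintype X] [DecidableEq X] {π η : X → ℝ}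
    {k : X → X → ℝ} {γ : X → X → List X} {B G Bη Gη : Finset X} {p : ℝ} (hp : p ∈ Set.Ioc 0 1)
    (hπ : ∀ x, 0 < π x) (hπ1 : ∑ x, π x = 1) (hη : ∀ x, 0 ≤ η x) (hη1 : ∑ x, η x = 1)
    (hk : ∀ x y, 0 ≤ k x y) (hγ : IsPathSystem k γ) (hcover : B ∪ G = Finset.univ)
    (hcoverη : Bη ∪ Gη = Finset.univ) :
    1 / genPoincare π k η p ≤
      2 ^ (3 * (2 / p) - 3) * (maxPathLength γ * maxCongestion π η k γ G Gη +
        2 * (∑ e ∈ badEdges γ B Bη, 1 / Qw π k e) *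
          ((∑ x ∈ B, π x) ^ (2 / p) + (∑ x ∈ Bη, η x) ^ (2 / p))) := by
  obtain ⟨hp0, hp1⟩ := hp
  have hq : 2 ≤ 2 / p := by rw [le_div_iff₀ hp0]; linarith
  have hπ0 : ∀ x, 0 ≤ π x := fun x => (hπ x).le
  refine one_div_sInf_le_of_forall_one_le_mul ?_ ?_
  · have := maxPathLength_nonneg γ
    have := maxCongestion_nonneg hπ0 hη hk (γ := γ) G Gη
    have := Finset.sum_nonneg fun e (_ : e ∈ badEdges γ B Bη) =>
      one_div_nonneg.2 (Qw_nonneg hπ0 hk e)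
    have := Finset.sum_nonneg fun x (_ : x ∈ B) => hπ0 x
    have := Finset.sum_nonneg fun x (_ : x ∈ Bη) => hη x
    positivity
  rintro _ ⟨f, -, hf, hD, rfl⟩
  have hDq : 0 < (∑ x, η x * |f x|) ^ (2 / p) := Real.rpow_pos_of_pos
    ((Finset.sum_nonneg fun x _ => mul_nonneg (hη x) (abs_nonneg _)).lt_of_ne' hD) _
  have key := rpow_sum_mul_abs_le hq hπ hπ1 hη hη1 hk hγ hcover hcoverη hf (abs_le_supNorm f)
  rw [show (2 - 2 * p) / p = 2 / p - 2 by field_simp, ← mul_div_assoc, le_div_iff₀ hDq, one_mul]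
  exact key.trans_eq (by ring)

theorem statement7_general {X : Type} [Fintype X] [DecidableEq X]
    (π : X → ℝ) (hπpos : ∀ x, 0 < π x) (hπ1 : ∑ x, π x = 1)
    (k : X → X → ℝ) (hknn : ∀ x y, 0 ≤ k x y)
    -- a choice of a path `γ x y` from `x` to `y` for each pair of distinct points
    (γ : X → X → List X)
    (hγ : ∀ x y, x ≠ y → (γ x y).head? = some x ∧ (γ x y).getLast? = some y ∧
      ∀ e ∈ pathEdges (γ x y), k e.1 e.2 ≠ 0)
    (p : ℝ) (hp : p ∈ Set.Ioc (0 : ℝ) 1)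
    -- two partitions of the state space
    (B G : Finset X) (hcover : B ∪ G = Finset.univ)
    (Bη Gη : Finset X) (hcoverη : Bη ∪ Gη = Finset.univ)
    (η : X → ℝ) (hηnn : ∀ x, 0 ≤ η x) (hη1 : ∑ x, η x = 1) :
    1 / genPoincare π k η p ≤
      (2 : ℝ) ^ (6 / p - 3) *
        ((sSup { r : ℝ | ∃ x y : X, x ≠ y ∧ r = ((γ x y).length - 1 : ℕ) }) *
          (sSup { r : ℝ | ∃ e : X × X, Qw π k e ≠ 0 ∧
            r = (1 / Qw π k e) *
              ∑ x, ∑ y, if x ∈ G ∧ y ∈ Gη ∧ x ≠ y ∧ e ∈ pathEdges (γ x y) then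
                π x * η y else 0 }) +
        2 * (∑ e : X × X,
              if ∃ x y : X, x ≠ y ∧ e ∈ pathEdges (γ x y) ∧ (x ∈ B ∨ y ∈ Bη) then
                1 / Qw π k e else 0) *
          ((∑ x ∈ B, π x) ^ (2 / p) + (∑ x ∈ Bη, η x) ^ (2 / p))) := by
  have h := one_div_genPoincare_le hp hπpos hπ1 hηnn hη1 hknn hγ hcover hcoverη
  rw [badEdges, Finset.sum_filter, show 3 * (2 / p) - 3 = 6 / p - 3 by ring] at h
  exact h

theorem statement7 {X : Type} [Fintype X] [DecidableEq X] [Nonempty X]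
    (π : X → ℝ) (hπpos : ∀ x, 0 < π x) (hπ1 : ∑ x, π x = 1)
    (k : X → X → ℝ) (hknn : ∀ x y, 0 ≤ k x y) (hksymm : ∀ x y, k x y = k y x)
    (hconn : (SimpleGraph.fromRel fun x y => k x y ≠ 0).Connected)
    -- a choice of a path `γ x y` from `x` to `y` for each pair of distinct points
    (γ : X → X → List X)
    (hγ : ∀ x y, x ≠ y → (γ x y).head? = some x ∧ (γ x y).getLast? = some y ∧
      ∀ e ∈ pathEdges (γ x y), k e.1 e.2 ≠ 0)
    (p : ℝ) (hp : p ∈ Set.Ioc (0 : ℝ) 1)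
    -- two partitions of the state space
    (B G : Finset X) (hBG : Disjoint B G) (hcover : B ∪ G = Finset.univ)
    (Bη Gη : Finset X) (hBGη : Disjoint Bη Gη) (hcoverη : Bη ∪ Gη = Finset.univ)
    (η : X → ℝ) (hηnn : ∀ x, 0 ≤ η x) (hη1 : ∑ x, η x = 1) :
    1 / genPoincare π k η p ≤
      (2 : ℝ) ^ (6 / p - 3) *
        ((sSup { r : ℝ | ∃ x y : X, x ≠ y ∧ r = ((γ x y).length - 1 : ℕ) }) *
          (sSup { r : ℝ | ∃ e : X × X, Qw π k e ≠ 0 ∧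
            r = (1 / Qw π k e) *
              ∑ x, ∑ y, if x ∈ G ∧ y ∈ Gη ∧ x ≠ y ∧ e ∈ pathEdges (γ x y) then
                π x * η y else 0 }) +
        2 * (∑ e : X × X,
              if ∃ x y : X, x ≠ y ∧ e ∈ pathEdges (γ x y) ∧ (x ∈ B ∨ y ∈ Bη) then
                1 / Qw π k e else 0) *
          ((∑ x ∈ B, π x) ^ (2 / p) + (∑ x ∈ Bη, η x) ^ (2 / p))) :=
  statement7_general π hπpos hπ1 k hknn γ hγ p hp B G hcover Bη Gη hcoverη η hηnn hη1

end
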